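/- arXiv:1907.01401 — 5 statements merged into one kernel-verified Lean document; each statement's English description precedes it below -/
import Mathlib

section
/- Let D ≥ 2 and i ∈ [1,D]. With T_i : V' → V as above and V_i = image(T_i), the orthogonal complement of e_i in V (with respect to the form (e_a,e_b) = 1 iff |a−b| = 1) equals V_i ⊕ 𝔽₂·e_i. -/
/-- The bilinear form on `𝔽₂^n` determined by `(e_i, e_j) = 1` iff `|i - j| = 1`. -/
def bform (n : ℕ) (x y : Fin n → ZMod 2) : ZMod 2 :=
  ∑ a : Fin n, ∑ b : Fin n,
    if a.1 = b.1 + 1 ∨ b.1 = a.1 + 1 then x a * y b else 0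

/-- The basis vector `e_i` of `𝔽₂^n` (1-based index `i`). -/
def basisVec (n i : ℕ) : Fin n → ZMod 2 := fun k => if k.1 + 1 = i then 1 else 0

/-- Coefficient of `e_k` in `T_i(e'_j)` (all indices 1-based). -/
def tcoef (i j k : ℕ) : ZMod 2 :=
  if j + 2 ≤ i then (if k = j then 1 else 0)
  else if j + 1 = i then (if k = i - 1 ∨ k = i ∨ k = i + 1 then 1 else 0)
  else (if k = j + 2 then 1 else 0)

/-- The linear map `T_i : 𝔽₂^{D-2} → 𝔽₂^D`. -/
def Tmap (D i : ℕ) (x : Fin (D - 2) → ZMod 2) : Fin D → ZMod 2 :=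
  fun k => ∑ j : Fin (D - 2), x j * tcoef i (j.1 + 1) (k.1 + 1)

/-!
Work in 1-based coordinates extended by zero. Then `(y, e_i) = y_{i-1} + y_{i+1}`, and the
coordinates `i - 1, i, i + 1` of `T_i x` all equal `x_{i-1}`, while every other coordinate of
`T_i x` is a single entry of `x`. Hence `T_i x` and `e_i` are orthogonal to `e_i`, and `e_i` is not
in the image of `T_i` because its coordinates `i - 1` and `i` differ. Conversely, an orthogonal
`y` equals `T_i x' + (y_i + y_{i-1}) e_i`, where `x'` lists the coordinates of `y` other than
`y_i, y_{i+1}`.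
-/

open Finset

section coord

variable {R : Type*} {n : ℕ}

def coord [Zero R] (x : Fin n → R) (k : ℕ) : R :=
  if h : 1 ≤ k ∧ k ≤ n then x ⟨k - 1, by omega⟩ else 0

lemma coord_eq_zero [Zero R] (x : Fin n → R) {k : ℕ} (hk : ¬(1 ≤ k ∧ k ≤ n)) :
    coord x k = 0 :=
  dif_neg hk

lemma coord_at_zero [Zero R] (x : Fin n → R) : coord x 0 = 0 :=
  coord_eq_zero x (by omega)

lemma coord_succ [Zero R] (x : Fin n → R) (j : Fin n) : coord x (j.1 + 1) = x j :=
  dif_pos (by omega)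

lemma coord_mk [Zero R] (f : ℕ → R) (k : ℕ) :
    coord (fun j : Fin n => f (j.1 + 1)) k = if 1 ≤ k ∧ k ≤ n then f k else 0 := by
  unfold coord
  split_ifs with h
  · exact congrArg f (show k - 1 + 1 = k by omega)
  · rfl

lemma coord_add [AddZeroClass R] (x y : Fin n → R) (k : ℕ) :
    coord (x + y) k = coord x k + coord y k := by
  unfold coord; split_ifs <;> simp

lemma coord_smul [MulZeroClass R] (c : R) (x : Fin n → R) (k : ℕ) :
    coord (c • x) k = c * coord x k := by
  unfold coord; split_ifs <;> simp

lemma eq_of_coord_eq [Zero R] {x y : Fin n → R}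
    (h : ∀ k, 1 ≤ k → k ≤ n → coord x k = coord y k) : x = y := by
  funext j
  simpa only [coord_succ] using h (j.1 + 1) (by omega) (by omega)

lemma sum_ite_val_succ_eq [AddCommMonoid R] (x : Fin n → R) (k : ℕ) :
    (∑ j : Fin n, if j.1 + 1 = k then x j else 0) = coord x k := by
  unfold coord
  split_ifs with h
  · rw [Fintype.sum_eq_single ⟨k - 1, by omega⟩
      fun j hj => if_neg fun hjk => hj (Fin.ext (show j.1 = k - 1 by omega))]
    exact if_pos (show k - 1 + 1 = k by omega)
  · exact Fintype.sum_eq_zero _ fun j => if_neg (by have := j.2; omega)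

end coord

/-- `T_i x` has `k`-th coordinate `x_{tsrc i k}`; the three coordinates `i - 1, i, i + 1` all
read `x_{i-1}`. -/
def tsrc (i k : ℕ) : ℕ :=
  if k + 2 ≤ i then k else if i + 2 ≤ k then k - 2 else i - 1

lemma tcoef_eq_ite {i j : ℕ} (k : ℕ) (hj : 1 ≤ j) :
    tcoef i j k = if j = tsrc i k then 1 else 0 := by
  unfold tcoef tsrc
  split_ifs <;> first | rfl | omega

lemma tsrc_of_near {i k : ℕ} (h : i ≤ k + 1) (h' : k ≤ i + 1) : tsrc i k = i - 1 := by
  rw [tsrc, if_neg (by omega), if_neg (by omega)]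

lemma coord_Tmap (D i : ℕ) (x : Fin (D - 2) → ZMod 2) (k : ℕ) :
    coord (Tmap D i x) k = coord x (tsrc i k) := by
  by_cases hk : 1 ≤ k ∧ k ≤ D
  · rw [coord, dif_pos hk, Tmap, ← sum_ite_val_succ_eq]
    refine Fintype.sum_congr _ _ fun j => ?_
    rw [tcoef_eq_ite _ (by omega), mul_boole, show k - 1 + 1 = k by omega]
  · rw [coord_eq_zero _ hk, coord_eq_zero]
    unfold tsrc
    split_ifs <;> omega

lemma coord_Tmap_of_near {D i k : ℕ} (x : Fin (D - 2) → ZMod 2) (h : i ≤ k + 1)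
    (h' : k ≤ i + 1) :
    coord (Tmap D i x) k = coord x (i - 1) := by
  rw [coord_Tmap, tsrc_of_near h h']

lemma coord_basisVec {D i : ℕ} (hi : 1 ≤ i) (hiD : i ≤ D) (k : ℕ) :
    coord (basisVec D i) k = if k = i then 1 else 0 := by
  simp only [coord, basisVec]
  split_ifs <;> first | rfl | omega

lemma bform_eq_sum {n : ℕ} (x y : Fin n → ZMod 2) :
    bform n x y = ∑ a : Fin n, x a * (coord y a.1 + coord y (a.1 + 2)) := by
  refine Fintype.sum_congr _ _ fun a => ?_
  rw [mul_add, ← sum_ite_val_succ_eq, ← sum_ite_val_succ_eq, mul_sum, mul_sum,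
    ← sum_add_distrib]
  refine Fintype.sum_congr _ _ fun b => ?_
  split_ifs <;> first | omega | simp

lemma bform_basisVec {D i : ℕ} (hi : 1 ≤ i) (hiD : i ≤ D) (y : Fin D → ZMod 2) :
    bform D y (basisVec D i) = coord y (i - 1) + coord y (i + 1) := by
  simp only [bform_eq_sum, coord_basisVec hi hiD, mul_add, mul_boole, sum_add_distrib]
  rw [add_comm (coord y (i - 1)), ← sum_ite_val_succ_eq, ← sum_ite_val_succ_eq]
  congr 1 <;> exact Fintype.sum_congr _ _ fun a => if_congr (by omega) rfl rfl

lemma bform_Tmap_add_smul_basisVec {D i : ℕ} (hi : 1 ≤ i) (hiD : i ≤ D)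
    (x : Fin (D - 2) → ZMod 2) (c : ZMod 2) :
    bform D (Tmap D i x + c • basisVec D i) (basisVec D i) = 0 := by
  simp only [bform_basisVec hi hiD, coord_add, coord_smul, coord_basisVec hi hiD,
    coord_Tmap_of_near (i := i) (k := i - 1) x (by omega) (by omega),
    coord_Tmap_of_near (i := i) (k := i + 1) x (by omega) (by omega),
    if_neg (show i - 1 ≠ i by omega), if_neg (show i + 1 ≠ i by omega), mul_zero, add_zero,
    CharTwo.add_self_eq_zero]

lemma exists_Tmap_add_smul_of_bform_eq_zero {D i : ℕ} (hi : 1 ≤ i) (hiD : i ≤ D)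
    {y : Fin D → ZMod 2} (hy : bform D y (basisVec D i) = 0) :
    ∃ (x : Fin (D - 2) → ZMod 2) (c : ZMod 2), y = Tmap D i x + c • basisVec D i := by
  rw [bform_basisVec hi hiD, CharTwo.add_eq_zero] at hy
  -- if `i - 1` is not an index of `V'` (`i = 1` or `i = D`), orthogonality forces `y_{i-1} = 0`
  have hpred :
      coord y (i - 1) = if 1 ≤ i - 1 ∧ i - 1 ≤ D - 2 then coord y (i - 1) else 0 := by
    split_ifs with h
    · rfl
    · rcases (by omega : i = 1 ∨ i = D) with rfl | rfl
      · exact coord_at_zero y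
      · rw [hy]; exact coord_eq_zero y (by omega)
  let f : ℕ → ZMod 2 := fun m => coord y (if m < i then m else m + 2)
  refine ⟨fun j => f (j.1 + 1), coord y i + coord y (i - 1), eq_of_coord_eq fun k hk hkD => ?_⟩
  rw [coord_add, coord_smul, coord_Tmap, coord_mk, coord_basisVec hi hiD]
  by_cases hnear : i ≤ k + 1 ∧ k ≤ i + 1
  · have hf : f (i - 1) = coord y (i - 1) := by simp only [f, if_pos (show i - 1 < i by omega)]
    rw [tsrc_of_near hnear.1 hnear.2, hf, ← hpred]
    rcases (by omega : k = i - 1 ∨ k = i ∨ k = i + 1) with rfl | rfl | rfl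
    · rw [if_neg (by omega), mul_zero, add_zero]
    · rw [if_pos rfl, mul_one, ← add_assoc, add_comm (coord y (k - 1)), add_assoc,
        CharTwo.add_self_eq_zero, add_zero]
    · rw [if_neg (by omega), mul_zero, add_zero, hy]
  · rw [if_pos (show 1 ≤ tsrc i k ∧ tsrc i k ≤ D - 2 by unfold tsrc; split_ifs <;> omega),
      if_neg (show k ≠ i by omega), mul_zero, add_zero]
    show coord y k = coord y (if tsrc i k < i then tsrc i k else tsrc i k + 2)
    congr 1
    unfold tsrc
    split_ifs <;> omega

lemma basisVec_notMem_range_Tmap {D i : ℕ} (hi : 1 ≤ i) (hiD : i ≤ D) :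
    basisVec D i ∉ Set.range (Tmap D i) := by
  rintro ⟨x, hx⟩
  have h := (coord_Tmap_of_near (i := i) (k := i - 1) x (by omega) (by omega)).trans
    (coord_Tmap_of_near (i := i) (k := i) x (by omega) (by omega)).symm
  rw [hx, coord_basisVec hi hiD, coord_basisVec hi hiD, if_neg (by omega), if_pos rfl] at h
  exact zero_ne_one h

theorem stmt_6_general (D i : ℕ) (hi : 1 ≤ i) (hiD : i ≤ D) :
    (∀ y : Fin D → ZMod 2,
        bform D y (basisVec D i) = 0 ↔
          ∃ (x' : Fin (D - 2) → ZMod 2) (c : ZMod 2),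
            y = Tmap D i x' + c • basisVec D i) ∧
      basisVec D i ∉ Set.range (Tmap D i) :=
  ⟨fun _ => ⟨exists_Tmap_add_smul_of_bform_eq_zero hi hiD,
    fun ⟨x, c, hy⟩ => hy ▸ bform_Tmap_add_smul_basisVec hi hiD x c⟩,
    basisVec_notMem_range_Tmap hi hiD⟩

/-- The orthogonal complement of `e_i` in `V` equals `V_i ⊕ 𝔽₂·e_i`, where
`V_i` is the image of `T_i`. -/
theorem stmt_6 (D i : ℕ) (hD : 2 ≤ D) (hi : 1 ≤ i) (hiD : i ≤ D) :
    (∀ y : Fin D → ZMod 2,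
        bform D y (basisVec D i) = 0 ↔
          ∃ (x' : Fin (D - 2) → ZMod 2) (c : ZMod 2),
            y = Tmap D i x' + c • basisVec D i) ∧
      basisVec D i ∉ Set.range (Tmap D i) :=
  stmt_6_general D i hi hiD
end

section
/- Let B be a set of intervals in [1,D] satisfying (P₀) (any two members are equal, non-touching, or nested). Then the vectors {e_I : I ∈ B} are linearly independent over 𝔽₂, hence form a basis of the subspace ⟨B⟩ they span. -/
/-! Among the intervals carrying a nonzero coefficient in a vanishing combination, take a longest
one `I = [a, b]`. By (P₀) every other such interval is disjoint from `I` with a gap, nested inside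
`I`, or contains `I`; the last is excluded by maximality, and in the other two cases it misses the
point `a`. So the `a`-th coordinate of the combination is the coefficient of `I` alone, which
therefore vanishes. -/

/-- An interval `[a,b] ⊆ [1,D]`, encoded as the pair `(a,b)`. -/
def IsInterval (D : ℕ) (p : ℕ × ℕ) : Prop := 1 ≤ p.1 ∧ p.1 ≤ p.2 ∧ p.2 ≤ D

/-- `p` and `q` are non-touching. -/
def NonTouch (p q : ℕ × ℕ) : Prop := q.2 + 2 ≤ p.1 ∨ p.2 + 2 ≤ q.1

/-- `p ≺ q` : `p` is nested in `q`. -/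
def Prec (p q : ℕ × ℕ) : Prop := q.1 < p.1 ∧ p.2 < q.2

/-- Property (P₀): any two members of `B` are equal, non-touching, or nested. -/
def P0 (B : Finset (ℕ × ℕ)) : Prop :=
  ∀ p ∈ B, ∀ q ∈ B, p = q ∨ NonTouch p q ∨ Prec p q ∨ Prec q p

/-- The vector `e_I = ∑_{i ∈ I} e_i` of an interval `I = (a,b)` (1-based). -/
def eI (D : ℕ) (p : ℕ × ℕ) : Fin D → ZMod 2 :=
  fun k => if p.1 ≤ k.1 + 1 ∧ k.1 + 1 ≤ p.2 then 1 else 0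

theorem linearIndependent_of_exists_isolating_coord {ι κ R : Type*} [Fintype ι] [Ring R]
    [NoZeroDivisors R] (v : ι → κ → R)
    (h : ∀ s : Finset ι, s.Nonempty → ∃ i ∈ s, ∃ k, v i k ≠ 0 ∧ ∀ j ∈ s, j ≠ i → v j k = 0) :
    LinearIndependent R v := by
  classical
  rw [Fintype.linearIndependent_iff]
  intro g hg
  by_contra! hne
  obtain ⟨i, hi, k, hik, hjk⟩ := h {j | g j ≠ 0} (by simpa [Finset.Nonempty] using hne)
  have hcoord := congrFun hg k
  simp only [Finset.sum_apply, Pi.smul_apply, Pi.zero_apply, smul_eq_mul] at hcoord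
  rw [Finset.sum_eq_single i (fun j _ hji => by
      by_cases hgj : g j = 0
      · simp [hgj]
      · simp [hjk j (by simpa using hgj) hji]) (by simp)] at hcoord
  exact mul_ne_zero (by simpa using hi) hik hcoord

section Intervals

variable {D : ℕ} {p q : ℕ × ℕ}

-- Intervals are 1-based but the coordinates `Fin D` are 0-based, hence the shift.
def IsInterval.leftCoord (hp : IsInterval D p) : Fin D :=
  ⟨p.1 - 1, by obtain ⟨h1, h2, h3⟩ := hp; omega⟩

theorem IsInterval.val_leftCoord (hp : IsInterval D p) : (hp.leftCoord : ℕ) = p.1 - 1 := rfl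

theorem eI_leftCoord_self (hp : IsInterval D p) : eI D p hp.leftCoord = 1 := by
  obtain ⟨h1, h2, h3⟩ := id hp
  rw [eI, if_pos (by rw [hp.val_leftCoord]; omega)]

theorem eI_leftCoord_eq_zero (hp : IsInterval D p) (hpq : NonTouch p q ∨ Prec q p) :
    eI D q hp.leftCoord = 0 := by
  obtain ⟨h1, h2, h3⟩ := id hp
  unfold NonTouch Prec at hpq
  rw [eI, if_neg (by rw [hp.val_leftCoord]; omega)]

theorem Prec.sub_lt (hp : p.1 ≤ p.2) (hpq : Prec p q) : p.2 - p.1 < q.2 - q.1 := by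
  obtain ⟨h1, h2⟩ := hpq
  omega

end Intervals

/-- For a set `B` of intervals satisfying (P₀), the family `{e_I : I ∈ B}` is
linearly independent over `𝔽₂`. -/
theorem stmt_8 (D : ℕ) (B : Finset (ℕ × ℕ))
    (hB : ∀ p ∈ B, IsInterval D p) (h0 : P0 B) :
    LinearIndependent (ZMod 2) (fun p : {p // p ∈ B} => eI D p.1) := by
  refine linearIndependent_of_exists_isolating_coord _ fun s hs => ?_
  obtain ⟨i, hi, hlongest⟩ := s.exists_max_image (fun q => q.1.2 - q.1.1) hs
  have hiI := hB i.1 i.2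
  refine ⟨i, hi, hiI.leftCoord, by simp [eI_leftCoord_self], fun j hj hji => ?_⟩
  refine eI_leftCoord_eq_zero hiI ?_
  rcases h0 i.1 i.2 j.1 j.2 with heq | hfar | hin | hout
  · exact absurd (Subtype.ext heq.symm) hji
  · exact .inl hfar
  · exact absurd (hlongest j hj) (not_le.mpr (hin.sub_lt hiI.2.1))
  · exact .inr hout
end

section
/- Let D ≥ 2, i ∈ [1,D], and define u : V → ℤ by writing x ∈ V uniquely as a sum of e_{[a_s,b_s]} over pairwise non-touching intervals and setting u(x) = #{s : a_s even, b_s odd} − #{s : a_s odd, b_s even}; define u' : V' → ℤ analogously for D−2. Then for any x' ∈ V' and c ∈ 𝔽₂, u(T_i(x') + c·e_i) = u'(x'). -/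
/-- `L` is the normal form: a list of intervals of `[1,D]`, pairwise non-touching
and listed in increasing order. -/
def NormalDecomp (D : ℕ) (L : List (ℕ × ℕ)) : Prop :=
  (∀ p ∈ L, 1 ≤ p.1 ∧ p.1 ≤ p.2 ∧ p.2 ≤ D) ∧ L.Chain' (fun p q => p.2 + 2 ≤ q.1)

/-- `u` of a decomposition: (number of intervals `[a,b]` with `a` even, `b` odd)
minus (number with `a` odd, `b` even). -/
def uval (L : List (ℕ × ℕ)) : ℤ :=
  (L.countP (fun p => decide (p.1 % 2 = 0 ∧ p.2 % 2 = 1)) : ℤ) -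
    (L.countP (fun p => decide (p.1 % 2 = 1 ∧ p.2 % 2 = 0)) : ℤ)

/-!
Read `x ∈ 𝔽₂^n` as the integer sequence `x̂` with `x̂ₖ = x_k ∈ {0, 1}` for `1 ≤ k ≤ n`, padded
by zeros. Then `u(x) = ∑ₖ (-1)^k x̂ₖ x̂ₖ₊₁`: an interval `[a, b]` contributes
`∑_{a ≤ k < b} (-1)^k`, which is `1`, `-1` or `0` according to the parities of `a` and `b`,
and non-touching intervals share no adjacent pair of coordinates. The sequence of
`T_i(x') + c·e_i` is that of `x'` with two entries inserted after position `i - 1`, the second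
a copy of `x̂'_{i-1}`; the two new products cancel, and every later product moves by two
places, keeping its sign.
-/

open Finset

namespace UInvariant

section Sequences

variable {R : Type*} [CommRing R]

def altPairSum (N : ℕ) (s : ℕ → R) : R :=
  ∑ k ∈ range N, (-1) ^ k * (s k * s (k + 1))

lemma altPairSum_add_of_separated (N b : ℕ) {s t : ℕ → R} (hs : ∀ k, b < k → s k = 0)
    (ht : ∀ k, k ≤ b + 1 → t k = 0) :
    altPairSum N (s + t) = altPairSum N s + altPairSum N t := by
  unfold altPairSum
  rw [← sum_add_distrib]
  refine sum_congr rfl fun k _ => ?_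
  rcases le_or_gt k b with hk | hk
  · simp only [Pi.add_apply, ht k (by omega), ht (k + 1) (by omega)]
    ring
  · simp only [Pi.add_apply, hs k hk, hs (k + 1) (by omega)]
    ring

/-- `h` is `g` with two entries inserted after position `m`, the second a copy of `g m`. -/
lemma altPairSum_insert_two {g h : ℕ → R} {m N : ℕ} (hmN : m ≤ N)
    (hlow : ∀ k ≤ m, h k = g k) (hhigh : ∀ k, m ≤ k → h (k + 2) = g k) :
    altPairSum (N + 2) h = altPairSum N g := by
  unfold altPairSum
  induction N, hmN using Nat.le_induction with
  | base =>
    have hprefix : ∑ k ∈ range m, (-1) ^ k * (h k * h (k + 1)) =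
        ∑ k ∈ range m, (-1) ^ k * (g k * g (k + 1)) :=
      sum_congr rfl fun k hk => by
        rw [mem_range] at hk
        rw [hlow k hk.le, hlow (k + 1) hk]
    have hcopy : h (m + 2) = h m := by rw [hhigh m le_rfl, hlow m le_rfl]
    rw [sum_range_succ, sum_range_succ, hprefix, hcopy, pow_succ]
    ring
  | succ N hmN ih =>
    rw [sum_range_succ, ih, sum_range_succ, hhigh N hmN, hhigh (N + 1) (by omega), pow_add]
    simp

end Sequences

def intervalWeight (p : ℕ × ℕ) : ℤ :=
  (if p.1 % 2 = 0 ∧ p.2 % 2 = 1 then 1 else 0) - (if p.1 % 2 = 1 ∧ p.2 % 2 = 0 then 1 else 0)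

lemma uval_eq_sum_map_intervalWeight (L : List (ℕ × ℕ)) :
    uval L = (L.map intervalWeight).sum := by
  induction L with
  | nil => rfl
  | cons p L ih =>
    rw [List.map_cons, List.sum_cons, ← ih]
    unfold uval intervalWeight
    simp only [List.countP_cons, decide_eq_true_eq]
    push_cast
    split_ifs <;> omega

lemma sum_Ico_neg_one_pow {a b : ℕ} (hab : a ≤ b) :
    ∑ k ∈ Ico a b, (-1 : ℤ) ^ k = intervalWeight (a, b) := by
  unfold intervalWeight
  induction b, hab using Nat.le_induction with
  | base =>
    simp only [Ico_self, sum_empty]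
    split_ifs <;> omega
  | succ b hab ih =>
    rw [sum_Ico_succ_top hab, ih]
    simp only [neg_one_pow_eq_ite, Nat.even_iff]
    split_ifs <;> omega

lemma altPairSum_indicator {p : ℕ × ℕ} {N : ℕ} (hp : p.1 ≤ p.2) (hN : p.2 < N) :
    altPairSum N (fun k => if p.1 ≤ k ∧ k ≤ p.2 then (1 : ℤ) else 0) = intervalWeight p := by
  have hterm : ∀ k ∈ range N,
      (-1 : ℤ) ^ k * ((if p.1 ≤ k ∧ k ≤ p.2 then 1 else 0) *
        (if p.1 ≤ k + 1 ∧ k + 1 ≤ p.2 then 1 else 0)) =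
      if k ∈ Ico p.1 p.2 then (-1) ^ k else 0 := fun k _ => by
    simp only [mem_Ico]
    split_ifs <;> first | ring1 | (exfalso; omega)
  have hIco : Ico p.1 p.2 ⊆ range N := fun k hk => by
    simp only [mem_Ico, mem_range] at hk ⊢
    omega
  rw [altPairSum, sum_congr rfl hterm, sum_ite_mem, inter_eq_right.mpr hIco,
    sum_Ico_neg_one_pow hp]

section ZeroExt

variable {M : Type*} [AddCommMonoid M]

/-- Coordinates are indexed from `1`, as in the paper; the sequence is padded by zeros. -/
def zeroExt (n : ℕ) : (Fin n → M) →+ (ℕ → M) where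
  toFun x k := if h : 1 ≤ k ∧ k ≤ n then x ⟨k - 1, by omega⟩ else 0
  map_zero' := by
    ext k
    simp
  map_add' x y := by
    ext k
    split_ifs <;> simp [*]

lemma zeroExt_of_mem {n k : ℕ} (x : Fin n → M) (h1 : 1 ≤ k) (h2 : k ≤ n) :
    zeroExt n x k = x ⟨k - 1, by omega⟩ :=
  dif_pos ⟨h1, h2⟩

lemma zeroExt_eq_zero {n k : ℕ} (x : Fin n → M) (h : k = 0 ∨ n < k) : zeroExt n x k = 0 :=
  dif_neg (by omega)

lemma sum_ite_eq_zeroExt {n : ℕ} (x : Fin n → M) (t : ℕ) :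
    ∑ j : Fin n, (if j.1 + 1 = t then x j else 0) = zeroExt n x t := by
  by_cases ht : 1 ≤ t ∧ t ≤ n
  · rw [zeroExt_of_mem x ht.1 ht.2, sum_eq_single ⟨t - 1, by omega⟩]
    · rw [if_pos (by simp only; omega)]
    · intro j _ hj
      rw [if_neg fun h => hj (Fin.ext (by simp only; omega))]
    · simp
  · rw [zeroExt_eq_zero x (by omega)]
    exact sum_eq_zero fun j _ => if_neg (by omega)

end ZeroExt

lemma zeroExt_eI {D : ℕ} {p : ℕ × ℕ} (ha : 1 ≤ p.1) (hb : p.2 ≤ D) (k : ℕ) :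
    zeroExt D (eI D p) k = if p.1 ≤ k ∧ k ≤ p.2 then 1 else 0 := by
  by_cases hk : 1 ≤ k ∧ k ≤ D
  · rw [zeroExt_of_mem _ hk.1 hk.2, eI, Nat.sub_add_cancel hk.1]
  · rw [zeroExt_eq_zero _ (by omega), if_neg (by omega)]

lemma zeroExt_sum_eI_eq_zero {D m k : ℕ} {L : List (ℕ × ℕ)} (hL : ∀ q ∈ L, m ≤ q.1)
    (hk : k < m) : zeroExt D (L.map (eI D)).sum k = 0 := by
  rw [map_list_sum, Pi.list_sum_apply, List.map_map, List.map_map]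
  refine List.sum_eq_zero fun a ha => ?_
  obtain ⟨q, hq, rfl⟩ := List.mem_map.mp ha
  have := hL q hq
  by_cases hk' : 1 ≤ k ∧ k ≤ D
  · simp only [Function.comp_apply, zeroExt_of_mem _ hk'.1 hk'.2, eI]
    rw [if_neg (by omega)]
  · exact zeroExt_eq_zero _ (by omega)

lemma le_fst_of_isChain {p : ℕ × ℕ} {L : List (ℕ × ℕ)} (hv : ∀ q ∈ L, q.1 ≤ q.2)
    (hc : (p :: L).IsChain fun p q => p.2 + 2 ≤ q.1) : ∀ q ∈ L, p.2 + 2 ≤ q.1 := by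
  induction L generalizing p with
  | nil => simp
  | cons a L ih =>
    rw [List.isChain_cons_cons] at hc
    have ha := hv a List.mem_cons_self
    have hL := ih (fun q hq => hv q (List.mem_cons_of_mem _ hq)) hc.2
    intro q hq
    rcases List.mem_cons.mp hq with rfl | hq
    · exact hc.1
    · have := hL q hq
      omega

def bitSeq (n : ℕ) (x : Fin n → ZMod 2) (k : ℕ) : ℤ := (zeroExt n x k).val

def uForm (n : ℕ) (x : Fin n → ZMod 2) : ℤ := altPairSum (n + 1) (bitSeq n x)

lemma bitSeq_add_of_disjoint {n : ℕ} {x y : Fin n → ZMod 2}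
    (h : ∀ k, zeroExt n x k = 0 ∨ zeroExt n y k = 0) :
    bitSeq n (x + y) = bitSeq n x + bitSeq n y := by
  funext k
  simp only [bitSeq, map_add, Pi.add_apply]
  rcases h k with h | h <;> simp [h]

lemma uForm_sum_eI {D : ℕ} {L : List (ℕ × ℕ)} (hL : NormalDecomp D L) :
    uForm D (L.map (eI D)).sum = (L.map intervalWeight).sum := by
  induction L with
  | nil =>
    simp [uForm, altPairSum, bitSeq]
  | cons p L ih =>
    obtain ⟨hv, hc⟩ := hL
    obtain ⟨ha, hab, hb⟩ := hv p List.mem_cons_self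
    have hvL : ∀ q ∈ L, 1 ≤ q.1 ∧ q.1 ≤ q.2 ∧ q.2 ≤ D :=
      fun q hq => hv q (List.mem_cons_of_mem _ hq)
    have htail : ∀ k ≤ p.2 + 1, zeroExt D (L.map (eI D)).sum k = 0 := fun k hk =>
      zeroExt_sum_eI_eq_zero (le_fst_of_isChain (fun q hq => (hvL q hq).2.1) hc) (by omega)
    have hsplit : bitSeq D (eI D p + (L.map (eI D)).sum) =
        (fun k => if p.1 ≤ k ∧ k ≤ p.2 then 1 else 0) + bitSeq D (L.map (eI D)).sum := by
      rw [bitSeq_add_of_disjoint fun k => ?_]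
      · congr
        funext k
        simp only [bitSeq, zeroExt_eI ha hb]
        split_ifs <;> rfl
      · rcases le_or_gt k (p.2 + 1) with hk | hk
        · exact .inr (htail k hk)
        · exact .inl (by rw [zeroExt_eI ha hb, if_neg (by omega)])
    rw [List.map_cons, List.sum_cons, uForm, hsplit,
      altPairSum_add_of_separated _ p.2 (fun k hk => if_neg (by omega))
        (fun k hk => by simp [bitSeq, htail k hk]),
      altPairSum_indicator hab (by omega), List.map_cons, List.sum_cons, ← ih ⟨hvL, hc.tail⟩,
      uForm]

/-- The coordinate of `x'` that `T_i` places at coordinate `κ` (both `1`-based; `0` when none). -/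
def sourceIndex (i κ : ℕ) : ℕ := if κ < i then κ else if κ ≤ i + 1 then i - 1 else κ - 2

lemma tcoef_eq_ite {i j : ℕ} (hi : 1 ≤ i) (hj : 1 ≤ j) (κ : ℕ) :
    tcoef i j κ = if j = sourceIndex i κ then 1 else 0 := by
  unfold tcoef sourceIndex
  split_ifs <;> first | rfl | omega

lemma Tmap_apply {D i : ℕ} (hi : 1 ≤ i) (x' : Fin (D - 2) → ZMod 2) (k : Fin D) :
    Tmap D i x' k = zeroExt (D - 2) x' (sourceIndex i (k.1 + 1)) := by
  rw [← sum_ite_eq_zeroExt, Tmap]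
  refine sum_congr rfl fun j _ => ?_
  rw [tcoef_eq_ite hi (Nat.succ_pos _)]
  split_ifs <;> simp

lemma zeroExt_Tmap_add_smul {D i κ : ℕ} (hi : 1 ≤ i) (hκ : κ ≠ i)
    (x' : Fin (D - 2) → ZMod 2) (c : ZMod 2) :
    zeroExt D (Tmap D i x' + c • basisVec D i) κ = zeroExt (D - 2) x' (sourceIndex i κ) := by
  by_cases h : 1 ≤ κ ∧ κ ≤ D
  · rw [zeroExt_of_mem _ h.1 h.2, Pi.add_apply, Pi.smul_apply, Tmap_apply hi, basisVec]
    simp only [Nat.sub_add_cancel h.1, hκ, if_false, smul_zero, add_zero]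
  · rw [zeroExt_eq_zero _ (by omega), zeroExt_eq_zero _ (by unfold sourceIndex; split_ifs <;> omega)]

lemma uForm_Tmap_add_smul {D i : ℕ} (hD : 2 ≤ D) (hi : 1 ≤ i) (hiD : i ≤ D)
    (x' : Fin (D - 2) → ZMod 2) (c : ZMod 2) :
    uForm D (Tmap D i x' + c • basisVec D i) = uForm (D - 2) x' := by
  rw [uForm, uForm, show D + 1 = D - 2 + 1 + 2 by omega]
  refine altPairSum_insert_two (m := i - 1) (by omega) (fun k hk => ?_) (fun k hk => ?_)
  · rw [bitSeq, zeroExt_Tmap_add_smul (κ := k) hi (by omega), sourceIndex, if_pos (by omega), bitSeq]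
  · have hsrc : sourceIndex i (k + 2) = k := by
      unfold sourceIndex
      split_ifs <;> omega
    rw [bitSeq, zeroExt_Tmap_add_smul hi (by omega), hsrc, bitSeq]

end UInvariant

open UInvariant in
/-- For any `x' ∈ V'` and `c ∈ 𝔽₂`, `u(T_i(x') + c·e_i) = u'(x')`. -/
theorem stmt_10 (D i : ℕ) (hD : 2 ≤ D) (hi : 1 ≤ i) (hiD : i ≤ D)
    (x' : Fin (D - 2) → ZMod 2) (c : ZMod 2) (L L' : List (ℕ × ℕ))
    (hL : NormalDecomp D L) (hLsum : (L.map (eI D)).sum = Tmap D i x' + c • basisVec D i)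
    (hL' : NormalDecomp (D - 2) L') (hL'sum : (L'.map (eI (D - 2))).sum = x') :
    uval L = uval L' := by
  rw [uval_eq_sum_map_intervalWeight, uval_eq_sum_map_intervalWeight, ← uForm_sum_eI hL,
    ← uForm_sum_eI hL', hLsum, hL'sum]
  exact uForm_Tmap_add_smul hD hi hiD x' c
end

section
/- Let B ∈ S_D be an element satisfying (P₀) and (P₁), and let I = [a,b] ∈ B with |I| odd (so b−a even). Then the number of intervals I' ∈ B of odd length with I' ⊆ I equals (b−a+2)/2. -/
/-- Property (P₁): for every odd-length `[a,b] ∈ B` with `b - a ≥ 2`, every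
`z ∈ {a+1, a+3, …, b-1}` lies in some odd-length member of `B` contained in
`[a+1, b-1]`. -/
def P1 (B : Finset (ℕ × ℕ)) : Prop :=
  ∀ p ∈ B, (p.2 - p.1) % 2 = 0 → p.1 + 2 ≤ p.2 →
    ∀ z : ℕ, p.1 + 1 ≤ z → z ≤ p.2 - 1 → z % 2 = (p.1 + 1) % 2 →
      ∃ q ∈ B, (q.2 - q.1) % 2 = 0 ∧ p.1 + 1 ≤ q.1 ∧ q.2 ≤ p.2 - 1 ∧
        q.1 ≤ z ∧ z ≤ q.2

open Finset

def sameParityIcc (c d : ℕ) : Finset ℕ := (Icc c d).filter (fun z => z % 2 = c % 2)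

lemma card_sameParityIcc {c d : ℕ} (h : c ≤ d) : #(sameParityIcc c d) = (d - c) / 2 + 1 := by
  have : sameParityIcc c d = (range ((d - c) / 2 + 1)).image (fun k => c + 2 * k) := by
    ext z
    simp only [sameParityIcc, mem_filter, mem_Icc, mem_image, mem_range]
    constructor
    · rintro ⟨⟨hcz, hzd⟩, hz⟩
      exact ⟨(z - c) / 2, by omega, by omega⟩
    · rintro ⟨k, hk, rfl⟩
      omega
  rw [this, card_image_of_injective _ (fun x y h => by omega), card_range]

section Tiling

variable {c d : ℕ} {T : Finset (ℕ × ℕ)}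

lemma fst_mod_two_eq_of_tiling (hT : ∀ M ∈ T, c ≤ M.1 ∧ M.1 ≤ M.2 ∧ M.2 ≤ d)
    (hdisj : (T : Set (ℕ × ℕ)).Pairwise NonTouch)
    (hcover : ∀ z ∈ sameParityIcc c d, ∃ M ∈ T, M.1 ≤ z ∧ z ≤ M.2)
    {M : ℕ × ℕ} (hM : M ∈ T) : M.1 % 2 = c % 2 := by
  by_contra hpar
  obtain ⟨hcM, hM12, hMd⟩ := hT M hM
  -- the point just left of `M` has the parity of `c`, so some other tile ends there
  obtain ⟨M', hM', hM'z, hzM'⟩ :=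
    hcover (M.1 - 1) (by simp only [sameParityIcc, mem_filter, mem_Icc]; omega)
  have hne : M ≠ M' := by rintro rfl; omega
  have hnt := hdisj hM hM' hne
  have := (hT M' hM').2.1
  unfold NonTouch at hnt
  omega

lemma sum_card_sameParityIcc_of_tiling (hT : ∀ M ∈ T, c ≤ M.1 ∧ M.1 ≤ M.2 ∧ M.2 ≤ d)
    (hdisj : (T : Set (ℕ × ℕ)).Pairwise NonTouch)
    (hcover : ∀ z ∈ sameParityIcc c d, ∃ M ∈ T, M.1 ≤ z ∧ z ≤ M.2) :
    ∑ M ∈ T, #(sameParityIcc M.1 M.2) = #(sameParityIcc c d) := by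
  have hpar := fun M (hM : M ∈ T) => fst_mod_two_eq_of_tiling hT hdisj hcover hM
  rw [← card_biUnion]
  · congr 1
    ext z
    simp only [mem_biUnion, sameParityIcc, mem_filter, mem_Icc]
    constructor
    · rintro ⟨M, hM, ⟨hMz, hzM⟩, hz⟩
      have := hT M hM
      have := hpar M hM
      omega
    · intro hz
      obtain ⟨M, hM, hMz, hzM⟩ :=
        hcover z (by simpa only [sameParityIcc, mem_filter, mem_Icc])
      have := hpar M hM
      exact ⟨M, hM, ⟨hMz, hzM⟩, by omega⟩
  · intro M hM M' hM' hne
    rw [Function.onFun, disjoint_left]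
    intro z hz hz'
    simp only [sameParityIcc, mem_filter, mem_Icc] at hz hz'
    have hnt := hdisj hM hM' hne
    unfold NonTouch at hnt
    omega

end Tiling

def oddIn (B : Finset (ℕ × ℕ)) (c d : ℕ) : Finset (ℕ × ℕ) :=
  B.filter (fun p => (p.2 - p.1) % 2 = 0 ∧ c ≤ p.1 ∧ p.2 ≤ d)

@[simp]
lemma mem_oddIn {B : Finset (ℕ × ℕ)} {c d : ℕ} {p : ℕ × ℕ} :
    p ∈ oddIn B c d ↔ p ∈ B ∧ (p.2 - p.1) % 2 = 0 ∧ c ≤ p.1 ∧ p.2 ≤ d :=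
  mem_filter

lemma oddIn_subset (B : Finset (ℕ × ℕ)) (c d : ℕ) : oddIn B c d ⊆ B := filter_subset _ B

lemma oddIn_eq_empty {B : Finset (ℕ × ℕ)} (hB : ∀ p ∈ B, p.1 ≤ p.2) {c d : ℕ}
    (h : d < c) : oddIn B c d = ∅ :=
  eq_empty_of_forall_notMem fun p hp => by
    obtain ⟨hpB, -, hcp, hpd⟩ := mem_oddIn.1 hp
    have := hB p hpB
    omega

open Classical in
noncomputable def outermost (S : Finset (ℕ × ℕ)) : Finset (ℕ × ℕ) :=
  S.filter (fun q => ∀ r ∈ S, ¬ Prec q r)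

open Classical in
lemma mem_outermost {S : Finset (ℕ × ℕ)} {M : ℕ × ℕ} :
    M ∈ outermost S ↔ M ∈ S ∧ ∀ r ∈ S, ¬ Prec M r :=
  mem_filter

lemma outermost_subset (S : Finset (ℕ × ℕ)) : outermost S ⊆ S :=
  fun _ hM => (mem_outermost.1 hM).1

lemma exists_outermost_superset {S : Finset (ℕ × ℕ)} {p : ℕ × ℕ} (hp : p ∈ S) :
    ∃ M ∈ outermost S, M.1 ≤ p.1 ∧ p.2 ≤ M.2 := by
  obtain ⟨M, hM, hmax⟩ := (S.filter (fun q => q.1 ≤ p.1 ∧ p.2 ≤ q.2)).exists_max_image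
    (fun q => (q.2 : ℤ) - q.1) ⟨p, mem_filter.2 ⟨hp, le_rfl, le_rfl⟩⟩
  rw [mem_filter] at hM
  refine ⟨M, mem_outermost.2 ⟨hM.1, fun r hr hMr => ?_⟩, hM.2⟩
  unfold Prec at hMr
  have := hmax r (mem_filter.2 ⟨hr, by omega, by omega⟩)
  omega

lemma P0.mono {B S : Finset (ℕ × ℕ)} (h0 : P0 B) (hS : S ⊆ B) : P0 S :=
  fun p hp q hq => h0 p (hS hp) q (hS hq)

lemma outermost_pairwise_nonTouch {S : Finset (ℕ × ℕ)} (h0 : P0 S) :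
    (outermost S : Set (ℕ × ℕ)).Pairwise NonTouch := by
  intro M hM M' hM' hne
  rw [mem_coe, mem_outermost] at hM hM'
  rcases h0 M hM.1 M' hM'.1 with h | h | h | h
  · exact absurd h hne
  · exact h
  · exact absurd h (hM.2 M' hM'.1)
  · exact absurd h (hM'.2 M hM.1)

lemma card_oddIn_eq_sum_outermost {B : Finset (ℕ × ℕ)} (hB : ∀ p ∈ B, p.1 ≤ p.2)
    (h0 : P0 B) (c d : ℕ) :
    #(oddIn B c d) = ∑ M ∈ outermost (oddIn B c d), #(oddIn B M.1 M.2) := by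
  have hnt := outermost_pairwise_nonTouch (h0.mono (oddIn_subset B c d))
  rw [← card_biUnion]
  · congr 1
    ext p
    simp only [mem_biUnion, mem_oddIn]
    constructor
    · intro hp
      obtain ⟨M, hM, hMp, hpM⟩ := exists_outermost_superset (mem_oddIn.2 hp)
      exact ⟨M, hM, hp.1, hp.2.1, hMp, hpM⟩
    · rintro ⟨M, hM, hpB, hpo, hMp, hpM⟩
      have := mem_oddIn.1 (outermost_subset _ hM)
      exact ⟨hpB, hpo, by omega, by omega⟩
  · intro M hM M' hM' hne
    rw [Function.onFun, disjoint_left]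
    intro p hp hp'
    rw [mem_oddIn] at hp hp'
    have := hB p hp.1
    have hnt := hnt hM hM' hne
    unfold NonTouch at hnt
    omega

lemma card_oddIn_eq_card_inner_add_one {B : Finset (ℕ × ℕ)} (hB : ∀ p ∈ B, p.1 ≤ p.2)
    (h0 : P0 B) {a b : ℕ} (hab : (a, b) ∈ B) (hodd : (b - a) % 2 = 0) :
    #(oddIn B a b) = #(oddIn B (a + 1) (b - 1)) + 1 := by
  suffices oddIn B a b = insert (a, b) (oddIn B (a + 1) (b - 1)) by
    rw [this, card_insert_of_notMem (by simp)]
  ext p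
  simp only [mem_insert, mem_oddIn]
  constructor
  · rintro ⟨hpB, hpo, hap, hpb⟩
    have := hB p hpB
    rcases h0 p hpB (a, b) hab with h | h | h | h
    · exact .inl h
    · unfold NonTouch at h; omega
    · unfold Prec at h; exact .inr ⟨hpB, hpo, by omega, by omega⟩
    · unfold Prec at h; omega
  · rintro (rfl | ⟨hpB, hpo, hap, hpb⟩)
    · exact ⟨hab, hodd, le_rfl, le_rfl⟩
    · exact ⟨hpB, hpo, by omega, by omega⟩

lemma exists_outermost_covering_of_P1 {B : Finset (ℕ × ℕ)} (h1 : P1 B) {a b : ℕ}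
    (hab : (a, b) ∈ B) (hodd : (b - a) % 2 = 0) (hlen : a + 2 ≤ b) :
    ∀ z ∈ sameParityIcc (a + 1) (b - 1),
      ∃ M ∈ outermost (oddIn B (a + 1) (b - 1)), M.1 ≤ z ∧ z ≤ M.2 := by
  intro z hz
  rw [sameParityIcc, mem_filter, mem_Icc] at hz
  obtain ⟨q, hqB, hqo, hq1, hq2, hqz, hzq⟩ := h1 (a, b) hab hodd hlen z hz.1.1 hz.1.2 hz.2
  obtain ⟨M, hM, hMq, hqM⟩ := exists_outermost_superset (mem_oddIn.2 ⟨hqB, hqo, hq1, hq2⟩)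
  exact ⟨M, hM, by omega, by omega⟩

theorem card_oddIn {B : Finset (ℕ × ℕ)} (hB : ∀ p ∈ B, p.1 ≤ p.2) (h0 : P0 B)
    (h1 : P1 B) {a b : ℕ} (hab : (a, b) ∈ B) (hodd : (b - a) % 2 = 0) :
    #(oddIn B a b) = (b - a) / 2 + 1 := by
  induction hn : b - a using Nat.strong_induction_on generalizing a b with
  | _ n ih =>
  subst hn
  rw [card_oddIn_eq_card_inner_add_one hB h0 hab hodd]
  congr 1
  obtain hba | hlen : b = a ∨ a + 2 ≤ b := by have := hB _ hab; omega
  · subst hba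
    rw [Nat.sub_self, Nat.zero_div, card_eq_zero]
    exact oddIn_eq_empty hB (by omega)
  set S := oddIn B (a + 1) (b - 1)
  have hT : ∀ M ∈ outermost S, a + 1 ≤ M.1 ∧ M.1 ≤ M.2 ∧ M.2 ≤ b - 1 := fun M hM => by
    have hMS := mem_oddIn.1 (outermost_subset _ hM)
    exact ⟨hMS.2.2.1, hB M hMS.1, hMS.2.2.2⟩
  calc #S = ∑ M ∈ outermost S, #(oddIn B M.1 M.2) := card_oddIn_eq_sum_outermost hB h0 _ _
    _ = ∑ M ∈ outermost S, #(sameParityIcc M.1 M.2) := sum_congr rfl fun M hM => by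
        have hMS := mem_oddIn.1 (outermost_subset _ hM)
        have := hT M hM
        rw [ih _ (by omega) hMS.1 hMS.2.1 rfl, card_sameParityIcc this.2.1]
    _ = #(sameParityIcc (a + 1) (b - 1)) :=
        sum_card_sameParityIcc_of_tiling hT
          (outermost_pairwise_nonTouch (h0.mono (oddIn_subset B _ _)))
          (exists_outermost_covering_of_P1 h1 hab hodd hlen)
    _ = (b - a) / 2 := by rw [card_sameParityIcc (by omega)]; omega

/-- If `B` satisfies (P₀) and (P₁) and `I = [a,b] ∈ B` has odd length, then the
number of odd-length members of `B` contained in `I` equals `(b-a+2)/2`. -/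
theorem stmt_15 (D : ℕ) (B : Finset (ℕ × ℕ))
    (hB : ∀ p ∈ B, 1 ≤ p.1 ∧ p.1 ≤ p.2 ∧ p.2 ≤ D)
    (h0 : P0 B) (h1 : P1 B) (a b : ℕ) (hab : (a, b) ∈ B) (hodd : (b - a) % 2 = 0) :
    (B.filter (fun p => (p.2 - p.1) % 2 = 0 ∧ a ≤ p.1 ∧ p.2 ≤ b)).card =
      (b - a + 2) / 2 := by
  change #(oddIn B a b) = _
  rw [card_oddIn (fun p hp => (hB p hp).2.1) h0 h1 hab hodd]
  omega
end

section
/- Let B ∈ S_D (satisfying (P₀),(P₁),(P₂)). If I ∈ B has odd length and J ∈ B has even length, then J is not contained in I. -/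
/-- Property (P₂): there is a sequence `0 = h₀ < h₁ < ⋯ < h_{2k} < h_{2k+1} = D+1`
with `h_j ≡ j (mod 2)` whose middle terms give exactly the even-length members
`[h_j, h_{2k+1-j}]`, `1 ≤ j ≤ k`, of `B`, together with the filling condition on
odd-length members in the gaps. -/
def P2 (D : ℕ) (B : Finset (ℕ × ℕ)) : Prop :=
  ∃ (k : ℕ) (h : ℕ → ℕ),
    h 0 = 0 ∧ h (2 * k + 1) = D + 1 ∧
    (∀ j, j ≤ 2 * k → h j < h (j + 1)) ∧
    (∀ j, j ≤ 2 * k + 1 → h j % 2 = j % 2) ∧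
    (∀ p : ℕ × ℕ, (p ∈ B ∧ (p.2 - p.1) % 2 = 1) ↔
      ∃ j, 1 ≤ j ∧ j ≤ k ∧ p = (h j, h (2 * k + 1 - j))) ∧
    (∀ j, j ≤ 2 * k → j ≠ k → h j + 3 ≤ h (j + 1) →
      (j < k →
        ∀ z : ℕ, h j + 1 ≤ z → z ≤ h (j + 1) - 2 → z % 2 = (h j + 1) % 2 →
          ∃ q ∈ B, (q.2 - q.1) % 2 = 0 ∧ h j + 1 ≤ q.1 ∧ q.2 ≤ h (j + 1) - 2 ∧
            q.1 ≤ z ∧ z ≤ q.2) ∧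
      (k < j →
        ∀ z : ℕ, h j + 2 ≤ z → z ≤ h (j + 1) - 1 → z % 2 = (h j + 2) % 2 →
          ∃ q ∈ B, (q.2 - q.1) % 2 = 0 ∧ h j + 2 ≤ q.1 ∧ q.2 ≤ h (j + 1) - 1 ∧
            q.1 ≤ z ∧ z ≤ q.2))

/-!
Induction on the length of `I`. The endpoints of the even-length interval `J` have different
parities, so one of them, `z`, has the parity of `I.1 + 1`; it lies in `[I.1 + 1, I.2 - 1]`, and
(P₁) puts it in an odd-length member `q` of `B` strictly inside `I`. By (P₀), `q` must contain `J`
(it cannot be nested in `J`, since `z` is an endpoint of `J`), and `q` is shorter than `I`.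
-/

lemma exists_endpoint_mod_two_eq (a b c : ℕ) (h : (b - a) % 2 = 1) :
    ∃ z, (z = a ∨ z = b) ∧ z % 2 = c % 2 := by
  by_cases ha : a % 2 = c % 2
  · exact ⟨a, .inl rfl, ha⟩
  · exact ⟨b, .inr rfl, by omega⟩

lemma P0.prec_of_endpoint_mem {B : Finset (ℕ × ℕ)} (h0 : P0 B) {p q : ℕ × ℕ}
    (hp : p ∈ B) (hq : q ∈ B) (hne : p ≠ q) (hq_le : q.1 ≤ q.2) {z : ℕ}
    (hzq : z = q.1 ∨ z = q.2) (hzp : p.1 ≤ z ∧ z ≤ p.2) : Prec q p := by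
  rcases h0 p hp q hq with h | h | h | h
  · exact absurd h hne
  · unfold NonTouch at h; omega
  · unfold Prec at h; omega
  · exact h

theorem stmt_16_general (B : Finset (ℕ × ℕ))
    (h0 : P0 B) (h1 : P1 B)
    (I J : ℕ × ℕ) (hI : I ∈ B) (hJ : J ∈ B)
    (hIodd : (I.2 - I.1) % 2 = 0) (hJeven : (J.2 - J.1) % 2 = 1) :
    ¬ (I.1 ≤ J.1 ∧ J.2 ≤ I.2) := by
  induction hn : I.2 - I.1 using Nat.strong_induction_on generalizing I with
  | _ n ih =>
    rintro ⟨hIJ₁, hJI₂⟩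
    obtain ⟨z, hzJ, hz⟩ := exists_endpoint_mod_two_eq J.1 J.2 (I.1 + 1) hJeven
    obtain ⟨q, hq, hqodd, hIq₁, hqI₂, hqz₁, hqz₂⟩ :=
      h1 I hI hIodd (by omega) z (by omega) (by omega) hz
    have hqJ : q ≠ J := by rintro rfl; omega
    obtain ⟨hJq₁, hJq₂⟩ := h0.prec_of_endpoint_mem hq hJ hqJ (by omega) hzJ ⟨hqz₁, hqz₂⟩
    exact ih _ (by omega) q hq hqodd rfl ⟨hJq₁.le, hJq₂.le⟩

/-- For `B ∈ S_D` (satisfying (P₀),(P₁),(P₂)), no even-length member `J` of `B`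
is contained in an odd-length member `I`. -/
theorem stmt_16 (D : ℕ) (hD : Even D) (B : Finset (ℕ × ℕ))
    (hB : ∀ p ∈ B, 1 ≤ p.1 ∧ p.1 ≤ p.2 ∧ p.2 ≤ D)
    (h0 : P0 B) (h1 : P1 B) (h2 : P2 D B)
    (I J : ℕ × ℕ) (hI : I ∈ B) (hJ : J ∈ B)
    (hIodd : (I.2 - I.1) % 2 = 0) (hJeven : (J.2 - J.1) % 2 = 1) :
    ¬ (I.1 ≤ J.1 ∧ J.2 ≤ I.2) :=
  stmt_16_general B h0 h1 I J hI hJ hIodd hJeven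
end
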